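/- arXiv:2306.01488 — 5 statements merged into one kernel-verified Lean document; each statement's English description precedes it below -/
import Mathlib

section
/- If G is a connected finite simple graph on at least two vertices, then χ_i(G × K_2) = χ_i(G), where K_2 is the complete graph on two vertices. -/
open SimpleGraph Finset

variable {α β : Type*}

/-- The direct (tensor) product of two simple graphs. -/
def directProd (G : SimpleGraph α) (H : SimpleGraph β) : SimpleGraph (α × β) where
  Adj x y := G.Adj x.1 y.1 ∧ H.Adj x.2 y.2
  symm := ⟨fun x y h => ⟨h.1.symm, h.2.symm⟩⟩
  loopless := ⟨fun x h => G.loopless.irrefl x.1 h.1⟩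

/-- The strong product of two simple graphs. -/
def strongProd (G : SimpleGraph α) (H : SimpleGraph β) : SimpleGraph (α × β) where
  Adj x y := (x.1 = y.1 ∧ H.Adj x.2 y.2) ∨ (G.Adj x.1 y.1 ∧ x.2 = y.2) ∨
    (G.Adj x.1 y.1 ∧ H.Adj x.2 y.2)
  symm := by
    constructor
    rintro x y (⟨h1, h2⟩ | ⟨h1, h2⟩ | ⟨h1, h2⟩)
    · exact Or.inl ⟨h1.symm, h2.symm⟩
    · exact Or.inr (Or.inl ⟨h1.symm, h2.symm⟩)
    · exact Or.inr (Or.inr ⟨h1.symm, h2.symm⟩)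
  loopless := by
    constructor
    rintro x (⟨_, h⟩ | ⟨h, _⟩ | ⟨h, _⟩)
    · exact H.loopless.irrefl _ h
    · exact G.loopless.irrefl _ h
    · exact G.loopless.irrefl _ h

/-- The lexicographic product of two simple graphs. -/
def lexProd (G : SimpleGraph α) (H : SimpleGraph β) : SimpleGraph (α × β) where
  Adj x y := G.Adj x.1 y.1 ∨ (x.1 = y.1 ∧ H.Adj x.2 y.2)
  symm := by
    constructor
    rintro x y (h | ⟨h1, h2⟩)
    · exact Or.inl h.symm
    · exact Or.inr ⟨h1.symm, h2.symm⟩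
  loopless := by
    constructor
    rintro x (h | ⟨_, h⟩)
    · exact G.loopless.irrefl _ h
    · exact H.loopless.irrefl _ h

/-- The corona product `G ⊙ H`: vertex `(v, none)` is the vertex `v` of `G`, and
`(v, some h)` is the vertex `h` of the copy of `H` attached at `v`. -/
def corona (G : SimpleGraph α) (H : SimpleGraph β) : SimpleGraph (α × Option β) where
  Adj x y :=
    (x.2 = none ∧ y.2 = none ∧ G.Adj x.1 y.1) ∨
    (x.1 = y.1 ∧ x.2 = none ∧ y.2 ≠ none) ∨
    (x.1 = y.1 ∧ x.2 ≠ none ∧ y.2 = none) ∨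
    (x.1 = y.1 ∧ ∃ a b, x.2 = some a ∧ y.2 = some b ∧ H.Adj a b)
  symm := by
    constructor
    rintro x y (⟨h1, h2, h3⟩ | ⟨h1, h2, h3⟩ | ⟨h1, h2, h3⟩ | ⟨h1, a, b, h2, h3, h4⟩)
    · exact Or.inl ⟨h2, h1, h3.symm⟩
    · exact Or.inr (Or.inr (Or.inl ⟨h1.symm, h3, h2⟩))
    · exact Or.inr (Or.inl ⟨h1.symm, h3, h2⟩)
    · exact Or.inr (Or.inr (Or.inr ⟨h1.symm, b, a, h3, h2, h4.symm⟩))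
  loopless := by
    constructor
    rintro x (⟨_, _, h⟩ | ⟨_, h1, h2⟩ | ⟨_, h1, h2⟩ | ⟨_, a, b, h2, h3, h4⟩)
    · exact G.loopless.irrefl _ h
    · exact h2 h1
    · exact h1 h2
    · rw [h2] at h3
      injection h3 with h5
      subst h5
      exact H.loopless.irrefl _ h4

/-- `f` is an injective coloring of `G`: no vertex has two distinct neighbors
with the same color. -/
def IsInjColoring {V : Type*} (G : SimpleGraph V) {n : ℕ} (f : V → Fin n) : Prop :=
  ∀ v u w, G.Adj v u → G.Adj v w → u ≠ w → f u ≠ f w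

/-- The injective chromatic number: the least `n` such that `G` admits an
injective coloring with `n` colors. -/
noncomputable def injChrom {V : Type*} (G : SimpleGraph V) : ℕ :=
  sInf {n | ∃ f : V → Fin n, IsInjColoring G f}

/-- `f` is a 2-distance coloring of `G`: distinct vertices at distance at most
two get distinct colors. -/
def IsDistTwoColoring {V : Type*} (G : SimpleGraph V) {n : ℕ} (f : V → Fin n) : Prop :=
  ∀ u v, u ≠ v → (G.Adj u v ∨ ∃ w, G.Adj u w ∧ G.Adj w v) → f u ≠ f v

/-- The 2-distance chromatic number of `G`. -/
noncomputable def distTwoChrom {V : Type*} (G : SimpleGraph V) : ℕ :=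
  sInf {n | ∃ f : V → Fin n, IsDistTwoColoring G f}

lemma injColoring_set_nonempty {W : Type*} [Fintype W] (H : SimpleGraph W) :
    {n | ∃ f : W → Fin n, IsInjColoring H f}.Nonempty :=
  ⟨Fintype.card W, (Fintype.equivFin W), fun _ u w _ _ huw h =>
    huw ((Fintype.equivFin W).injective h)⟩

/-- for a connected finite graph `G` on at least two vertices,
`χ_i(G × K₂) = χ_i(G)`. -/
theorem injChrom_directProd_K2 {V : Type*} [Fintype V] (G : SimpleGraph V)
    (hconn : G.Connected) (hcard : 2 ≤ Fintype.card V) :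
    injChrom (directProd G (⊤ : SimpleGraph (Fin 2))) = injChrom G := by
  apply le_antisymm
  · -- from a coloring of G build one of the product
    obtain ⟨f, hf⟩ := Nat.sInf_mem (injColoring_set_nonempty G)
    apply Nat.sInf_le
    refine ⟨fun x => f x.1, ?_⟩
    rintro ⟨v, i⟩ ⟨u, j⟩ ⟨w, k⟩ ⟨hvu, hij⟩ ⟨hvw, hik⟩ hne' heq
    have hjk : j = k := by
      simp only [top_adj, ne_eq, Fin.ext_iff] at hij hik
      have := j.isLt; have := k.isLt; have := i.isLt
      exact Fin.ext (by omega)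
    have huw : u ≠ w := fun h => hne' (by rw [h, hjk])
    exact hf v u w hvu hvw huw heq
  · -- from a coloring of the product build one of G
    obtain ⟨F, hF⟩ := Nat.sInf_mem (injColoring_set_nonempty (directProd G (⊤ : SimpleGraph (Fin 2))))
    apply Nat.sInf_le
    refine ⟨fun v => F (v, 0), ?_⟩
    intro v u w hvu hvw huw heq
    have h01 : (⊤ : SimpleGraph (Fin 2)).Adj 1 0 := by decide
    exact hF (v, 1) (u, 0) (w, 0) ⟨hvu, h01⟩ ⟨hvw, h01⟩
      (fun h => huw (congrArg Prod.fst h)) heq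
end

section
/- For every m ∈ {3, 6} and every odd integer n ≥ 7, the injective chromatic number of the direct product of cycles satisfies χ_i(C_m × C_n) = 7. -/
open SimpleGraph Finset

variable {α β : Type*}

open scoped Fin.NatCast Fin.CommRing

/-! ### Auxiliary material for Statement 10 -/

private def uvec : Fin 3 → Fin 7 := ![0, 3, 5]
private def wvec : Fin 3 → Fin 7 := ![1, 2, 4]

/-- The color of the `x`-th vertex in a column at "position" `p`. -/
private def tcol (p : ℕ) (x : Fin 3) : Fin 7 :=
  if h : p < 7 then ⟨p, h⟩ + uvec x else if p % 2 = 1 then uvec x else wvec x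

private lemma tcol_inj (p : ℕ) (x y : Fin 3) (hxy : x ≠ y) : tcol p x ≠ tcol p y := by
  have hu : ∀ x y : Fin 3, x ≠ y → uvec x ≠ uvec y := by decide
  have hw : ∀ x y : Fin 3, x ≠ y → wvec x ≠ wvec y := by decide
  unfold tcol
  split_ifs with h h2
  · intro hE
    exact hu x y hxy (add_left_cancel hE)
  · exact hu x y hxy
  · exact hw x y hxy

private lemma tcol_ne_of_step (N p q : ℕ) (hN7 : 7 ≤ N) (hNodd : N % 2 = 1)
    (hp : p < N) (hq : q < N) (hpq : q = p + 1 ∨ (p = N - 1 ∧ q = 0))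
    (x y : Fin 3) : tcol p x ≠ tcol q y := by
  rcases hpq with h | ⟨h1, h2⟩
  · subst h
    by_cases h7 : p + 1 < 7
    · have hp6 : p < 6 := by omega
      clear hp hq hN7 hNodd
      interval_cases p <;> revert x y <;> decide
    · by_cases h7' : p < 7
      · have : p = 6 := by omega
        subst this
        revert x y; decide
      · -- p ≥ 7, p + 1 ≥ 8
        have hu : ∀ x y : Fin 3, uvec x ≠ wvec y := by decide
        have hw : ∀ x y : Fin 3, wvec x ≠ uvec y := by decide
        unfold tcol
        rw [dif_neg (by omega), dif_neg (by omega)]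
        rcases Nat.mod_two_eq_zero_or_one p with h2 | h2
        · rw [if_neg (by omega), if_pos (by omega)]
          exact hw x y
        · rw [if_pos (by omega), if_neg (by omega)]
          exact hu x y
  · subst h2
    by_cases hN : N = 7
    · have : p = 6 := by omega
      subst this
      revert x y; decide
    · have hp7 : 7 ≤ p := by omega
      have hp2 : p % 2 = 0 := by omega
      have hw0 : ∀ x y : Fin 3, wvec x ≠ tcol 0 y := by decide
      conv_lhs => rw [tcol, dif_neg (by omega), if_neg (by omega)]
      exact hw0 x y

/-- The position of column `b`: multiplication by `(n+1)/2`, the inverse of `2` mod `n`. -/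
private def posf (k : ℕ) (b : Fin (k + 7)) : Fin (k + 7) := (((k + 8) / 2 : ℕ) : Fin (k + 7)) * b

private lemma posf_step (k : ℕ) (ho : (k + 7) % 2 = 1) (b : Fin (k + 7)) :
    posf k (b + 2) = posf k b + 1 := by
  unfold posf
  have h2 : ((k + 8) / 2) * 2 = k + 8 := by omega
  have h1 : ((((k + 8) / 2) * 2 : ℕ) : Fin (k + 7)) = (((k + 8) : ℕ) : Fin (k + 7)) := by rw [h2]
  have h0 : (((k + 7) : ℕ) : Fin (k + 7)) = 0 := Fin.natCast_self _
  push_cast at h1 h0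
  linear_combination h1 + h0

private lemma tcol_cross (k : ℕ) (ho : (k + 7) % 2 = 1) (b : Fin (k + 7)) (x y : Fin 3) :
    tcol (posf k b).val x ≠ tcol (posf k (b + 2)).val y := by
  rw [posf_step k ho b]
  generalize posf k b = P
  have hval : (P + 1).val = (P.val + 1) % (k + 7) := by
    rw [Fin.val_add, Fin.val_one]
  have hlt := P.isLt
  refine tcol_ne_of_step (k + 7) P.val (P + 1).val (by omega) ho P.isLt (P + 1).isLt ?_ x y
  by_cases hPl : P.val = k + 6
  · refine Or.inr ⟨by omega, ?_⟩
    rw [hval, hPl, show k + 6 + 1 = k + 7 by omega, Nat.mod_self]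
  · refine Or.inl ?_
    rw [hval]
    exact Nat.mod_eq_of_lt (by omega)

private lemma two_ne_zero_fin (k : ℕ) : (2 : Fin (k + 7)) ≠ 0 := by
  have h : ((2 : ℕ) : Fin (k + 7)).val = 2 := Fin.val_cast_of_lt (by omega)
  intro hE
  rw [show ((2 : ℕ) : Fin (k + 7)) = (2 : Fin (k + 7)) by norm_cast, hE] at h
  simp at h

set_option maxHeartbeats 1000000 in
/-- From the four basic "distance-two" inequalities, conclude injective coloring. -/
private lemma isInj_of_four {M N c : ℕ} (f : Fin (M + 2) × Fin (N + 2) → Fin c)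
    (h1 : ∀ a b, f (a, b) ≠ f (a, b + 2))
    (h2 : ∀ a b, f (a, b) ≠ f (a + 2, b))
    (h3 : ∀ a b, f (a, b) ≠ f (a + 2, b + 2))
    (h4 : ∀ a b, f (a, b + 2) ≠ f (a + 2, b)) :
    IsInjColoring (directProd (cycleGraph (M + 2)) (cycleGraph (N + 2))) f := by
  intro v u w hvu hvw hne
  obtain ⟨v1, v2⟩ := v
  obtain ⟨u1, u2⟩ := u
  obtain ⟨w1, w2⟩ := w
  obtain ⟨hu1, hu2⟩ : _ ∧ _ := hvu
  obtain ⟨hw1, hw2⟩ : _ ∧ _ := hvw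
  rw [cycleGraph_adj] at hu1 hu2 hw1 hw2
  have conv : ∀ {r : ℕ} (a x : Fin (r + 2)), a - x = 1 ∨ x - a = 1 → x = a + 1 ∨ x = a - 1 := by
    rintro r a x (h | h)
    · right; linear_combination -h
    · left; linear_combination h
  have e1 : (v1 + 1 : Fin (M + 2)) = (v1 - 1) + 2 := by ring
  have e2 : (v2 + 1 : Fin (N + 2)) = (v2 - 1) + 2 := by ring
  rcases conv v1 u1 hu1 with h | h <;> subst h <;>
  rcases conv v2 u2 hu2 with h | h <;> subst h <;>
  rcases conv v1 w1 hw1 with h | h <;> subst h <;>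
  rcases conv v2 w2 hw2 with h | h <;> subst h <;>
  (try simp only [e1, e2] at hne) <;>
  (try simp only [e1, e2]) <;>
  first
    | exact absurd rfl hne
    | exact h1 _ _
    | exact (h1 _ _).symm
    | exact h2 _ _
    | exact (h2 _ _).symm
    | exact h3 _ _
    | exact (h3 _ _).symm
    | exact h4 _ _
    | exact (h4 _ _).symm

/-- Upper bound: an explicit injective 7-coloring. -/
private lemma upper_coloring {M : ℕ} (k : ℕ) (ho : (k + 7) % 2 = 1) (e : Fin (M + 2) → Fin 3)
    (he : ∀ a : Fin (M + 2), e (a + 2) ≠ e a) :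
    IsInjColoring (directProd (cycleGraph (M + 2)) (cycleGraph (k + 7)))
      (fun z : Fin (M + 2) × Fin (k + 7) => tcol (posf k z.2).val (e z.1)) := by
  apply isInj_of_four (M := M) (N := k + 5)
  · exact fun a b => tcol_cross k ho b (e a) (e a)
  · exact fun a b => tcol_inj _ _ _ (he a).symm
  · exact fun a b => tcol_cross k ho b (e a) (e (a + 2))
  · exact fun a b => (tcol_cross k ho b (e (a + 2)) (e a)).symm

/-- The four basic conflicts forced on any injective coloring. -/
private lemma conflicts {M N c : ℕ} (f : Fin (M + 2) × Fin (N + 2) → Fin c)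
    (hf : IsInjColoring (directProd (cycleGraph (M + 2)) (cycleGraph (N + 2))) f)
    (hM : (2 : Fin (M + 2)) ≠ 0) (hN : (2 : Fin (N + 2)) ≠ 0) :
    (∀ a b, f (a, b) ≠ f (a, b + 2)) ∧ (∀ a b, f (a, b) ≠ f (a + 2, b)) ∧
    (∀ a b, f (a, b) ≠ f (a + 2, b + 2)) ∧ (∀ a b, f (a, b) ≠ f (a + 2, b - 2)) := by
  have neFst : ∀ (a a' : Fin (M + 2)) (b b' : Fin (N + 2)), a' = a + 2 →
      ((a, b) : Fin (M + 2) × Fin (N + 2)) ≠ (a', b') := by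
    intro a a' b b' h hE
    have := congrArg Prod.fst hE
    simp only at this
    rw [h] at this
    exact hM (left_eq_add.mp this)
  have neSnd : ∀ (a : Fin (M + 2)) (b b' : Fin (N + 2)), b' = b + 2 →
      ((a, b) : Fin (M + 2) × Fin (N + 2)) ≠ (a, b') := by
    intro a b b' h hE
    have := congrArg Prod.snd hE
    simp only at this
    rw [h] at this
    exact hN (left_eq_add.mp this)
  refine ⟨?_, ?_, ?_, ?_⟩
  · intro a b
    exact hf (a + 1, b + 1) (a, b) (a, b + 2)
      ⟨cycleGraph_adj.mpr (Or.inl (by ring)), cycleGraph_adj.mpr (Or.inl (by ring))⟩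
      ⟨cycleGraph_adj.mpr (Or.inl (by ring)), cycleGraph_adj.mpr (Or.inr (by ring))⟩
      (neSnd a b (b + 2) rfl)
  · intro a b
    exact hf (a + 1, b + 1) (a, b) (a + 2, b)
      ⟨cycleGraph_adj.mpr (Or.inl (by ring)), cycleGraph_adj.mpr (Or.inl (by ring))⟩
      ⟨cycleGraph_adj.mpr (Or.inr (by ring)), cycleGraph_adj.mpr (Or.inl (by ring))⟩
      (neFst a (a + 2) b b rfl)
  · intro a b
    exact hf (a + 1, b + 1) (a, b) (a + 2, b + 2)
      ⟨cycleGraph_adj.mpr (Or.inl (by ring)), cycleGraph_adj.mpr (Or.inl (by ring))⟩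
      ⟨cycleGraph_adj.mpr (Or.inr (by ring)), cycleGraph_adj.mpr (Or.inr (by ring))⟩
      (neFst a (a + 2) b (b + 2) rfl)
  · intro a b
    exact hf (a + 1, b - 1) (a, b) (a + 2, b - 2)
      ⟨cycleGraph_adj.mpr (Or.inl (by ring)), cycleGraph_adj.mpr (Or.inr (by ring))⟩
      ⟨cycleGraph_adj.mpr (Or.inr (by ring)), cycleGraph_adj.mpr (Or.inl (by ring))⟩
      (neFst a (a + 2) b (b - 2) rfl)

/-- Lower bound core: no reduced 6-coloring can exist when `n` is odd. -/
private lemma no_six (k : ℕ) (ho : (k + 7) % 2 = 1) (F : Fin 3 → Fin (k + 7) → Fin 6)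
    (hcol : ∀ (x y : Fin 3) (j : Fin (k + 7)), x ≠ y → F x j ≠ F y j)
    (hcross : ∀ (x y : Fin 3) (j : Fin (k + 7)), F x j ≠ F y (j + 2)) : False := by
  classical
  set S : Fin (k + 7) → Finset (Fin 6) := fun j => {F 0 j, F 1 j, F 2 j} with hS
  have hcard : ∀ j, (S j).card = 3 := fun j => Finset.card_eq_three.mpr
    ⟨_, _, _, hcol 0 1 j (by decide), hcol 0 2 j (by decide), hcol 1 2 j (by decide), rfl⟩
  have hsub : ∀ j, S (j + 2) ⊆ (S j)ᶜ := by
    intro j c hc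
    rw [Finset.mem_compl]
    intro hc'
    simp only [hS, Finset.mem_insert, Finset.mem_singleton] at hc hc'
    rcases hc' with h | h | h <;> rcases hc with h' | h' | h' <;>
      exact hcross _ _ j (h.symm.trans h')
  have hcompl : ∀ j, S (j + 2) = (S j)ᶜ := by
    intro j
    refine Finset.eq_of_subset_of_card_le (hsub j) ?_
    rw [Finset.card_compl, hcard, hcard]
    simp
  have key : ∀ (t : ℕ) (j : Fin (k + 7)),
      S (j + ((2 * t : ℕ) : Fin (k + 7))) = if Even t then S j else (S j)ᶜ := by
    intro t
    induction t with
    | zero => intro j; simp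
    | succ t ih =>
      intro j
      have hstep : ((2 * (t + 1) : ℕ) : Fin (k + 7)) = ((2 * t : ℕ) : Fin (k + 7)) + 2 := by
        push_cast; ring
      rw [hstep, ← add_assoc, hcompl, ih j]
      by_cases h : Even t
      · rw [if_pos h, if_neg (by simp [Nat.even_add_one, h])]
      · rw [if_neg h, if_pos (by simp [Nat.even_add_one, h]), compl_compl]
  have hz : ((2 * (k + 7) : ℕ) : Fin (k + 7)) = 0 := by
    rw [Nat.cast_mul, Fin.natCast_self, mul_zero]
  have hkey := key (k + 7) 0
  rw [hz, add_zero] at hkey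
  have hodd : ¬ Even (k + 7) := by
    rw [Nat.even_iff]
    omega
  rw [if_neg hodd] at hkey
  have hmem : F 0 0 ∈ S 0 := Finset.mem_insert_self _ _
  have hmem' := hmem
  rw [hkey, Finset.mem_compl] at hmem'
  exact hmem' hmem

/-- Lower bound via an embedding `e : Fin 3 → Fin (M+2)` of a "conflict triangle". -/
private lemma no_six_coloring {M : ℕ} (k : ℕ) (ho : (k + 7) % 2 = 1) (e : Fin 3 → Fin (M + 2))
    (he1 : ∀ x y : Fin 3, x ≠ y → (e y = e x + 2 ∨ e x = e y + 2))
    (he2 : ∀ x y : Fin 3, e y = e x ∨ e y = e x + 2 ∨ e x = e y + 2)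
    (h2M : (2 : Fin (M + 2)) ≠ 0)
    (f : Fin (M + 2) × Fin (k + 7) → Fin 6)
    (hf : IsInjColoring (directProd (cycleGraph (M + 2)) (cycleGraph (k + 7))) f) : False := by
  obtain ⟨L1, L2, L3, L4⟩ := conflicts (M := M) (N := k + 5) f hf h2M (two_ne_zero_fin k)
  apply no_six k ho (fun x j => f (e x, j))
  · intro x y j hxy
    rcases he1 x y hxy with h | h
    · rw [h]
      exact L2 (e x) j
    · rw [h]
      exact (L2 (e y) j).symm
  · intro x y j
    rcases he2 x y with h | h | h
    · rw [h]
      exact L1 (e x) j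
    · rw [h]
      exact L3 (e x) j
    · have h4 := L4 (e y) (j + 2)
      rw [show (j + 2) - 2 = j by ring] at h4
      rw [h]
      exact h4.symm

/-- for `m ∈ {3, 6}` and odd `n ≥ 7`, `χ_i(C_m × C_n) = 7`. -/
theorem injChrom_directProd_cycles_seven (m n : ℕ) (hm : m ∈ ({3, 6} : Set ℕ))
    (hn : 7 ≤ n) (hno : Odd n) :
    injChrom (directProd (cycleGraph m) (cycleGraph n)) = 7 := by
  obtain ⟨k, rfl⟩ : ∃ k, n = k + 7 := ⟨n - 7, by omega⟩
  have ho : (k + 7) % 2 = 1 := Nat.odd_iff.mp hno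
  simp only [Set.mem_insert_iff, Set.mem_singleton_iff] at hm
  have hub : ∃ f : Fin m × Fin (k + 7) → Fin 7,
      IsInjColoring (directProd (cycleGraph m) (cycleGraph (k + 7))) f := by
    rcases hm with rfl | rfl
    · exact ⟨_, upper_coloring (M := 1) k ho id (by decide)⟩
    · exact ⟨_, upper_coloring (M := 4) k ho ![0, 1, 2, 0, 1, 2] (by decide)⟩
  have hlb : ∀ f : Fin m × Fin (k + 7) → Fin 6,
      ¬ IsInjColoring (directProd (cycleGraph m) (cycleGraph (k + 7))) f := by
    intro f hf
    rcases hm with rfl | rfl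
    · exact no_six_coloring (M := 1) k ho id (by decide) (by decide) (by decide) f hf
    · exact no_six_coloring (M := 4) k ho ![0, 2, 4] (by decide) (by decide) (by decide) f hf
  have hmem : 7 ∈ {c : ℕ | ∃ f : Fin m × Fin (k + 7) → Fin c,
      IsInjColoring (directProd (cycleGraph m) (cycleGraph (k + 7))) f} := hub
  unfold injChrom
  apply le_antisymm
  · exact Nat.sInf_le hmem
  · apply le_csInf ⟨7, hmem⟩
    rintro c ⟨f, hf⟩
    by_contra hlt
    push_neg at hlt
    have hc6 : c ≤ 6 := by omega
    apply hlb (fun z => Fin.castLE hc6 (f z))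
    intro v u w h1 h2 h3
    exact fun hE => hf v u w h1 h2 h3 (Fin.castLE_injective hc6 hE)
end

section
/- For every m ∈ {3, 6}, the injective chromatic number of the direct product of cycles satisfies χ_i(C_m × C_5) = 8. -/
open SimpleGraph Finset

variable {α β : Type*}

section Aux

instance {G : SimpleGraph α} {H : SimpleGraph β} [DecidableRel G.Adj] [DecidableRel H.Adj] :
    DecidableRel (directProd G H).Adj := fun _ _ => inferInstanceAs (Decidable (_ ∧ _))

/-- Generic: no 7-color injective coloring, given a 15-vertex injective map whose
image has the "any 3 contain a conflicting pair" property. -/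
lemma no_seven {M : ℕ} {G : SimpleGraph (Fin M × Fin 5)}
    (e : Fin 3 × Fin 5 → Fin M × Fin 5) (he : Function.Injective e)
    (hP : ∀ x y z : Fin 3 × Fin 5, x ≠ y → x ≠ z → y ≠ z →
      ∃ v, (G.Adj v (e x) ∧ G.Adj v (e y)) ∨ (G.Adj v (e x) ∧ G.Adj v (e z)) ∨
        (G.Adj v (e y) ∧ G.Adj v (e z)))
    (f : Fin M × Fin 5 → Fin 7) (hf : IsInjColoring G f) : False := by
  have hmaps : ∀ a ∈ (univ : Finset (Fin 3 × Fin 5)), f (e a) ∈ (univ : Finset (Fin 7)) :=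
    fun a _ => mem_univ _
  have hcard : (univ : Finset (Fin 7)).card * 2 < (univ : Finset (Fin 3 × Fin 5)).card := by
    simp
  obtain ⟨c, -, hc⟩ := Finset.exists_lt_card_fiber_of_mul_lt_card_of_maps_to hmaps hcard
  rw [Finset.two_lt_card_iff] at hc
  obtain ⟨x, y, z, hx, hy, hz, hxy, hxz, hyz⟩ := hc
  simp only [mem_filter] at hx hy hz
  obtain ⟨v, h⟩ := hP x y z hxy hxz hyz
  rcases h with ⟨h1, h2⟩ | ⟨h1, h2⟩ | ⟨h1, h2⟩
  · exact hf v (e x) (e y) h1 h2 (fun h => hxy (he h)) (by rw [hx.2, hy.2])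
  · exact hf v (e x) (e z) h1 h2 (fun h => hxz (he h)) (by rw [hx.2, hz.2])
  · exact hf v (e y) (e z) h1 h2 (fun h => hyz (he h)) (by rw [hy.2, hz.2])

lemma main_eq {M : ℕ} {G : SimpleGraph (Fin M × Fin 5)}
    (f8 : Fin M × Fin 5 → Fin 8) (h8 : IsInjColoring G f8)
    (h7 : ∀ f : Fin M × Fin 5 → Fin 7, IsInjColoring G f → False) :
    injChrom G = 8 := by
  have h8m : 8 ∈ {n | ∃ f : Fin M × Fin 5 → Fin n, IsInjColoring G f} := ⟨f8, h8⟩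
  refine le_antisymm (Nat.sInf_le h8m) ?_
  by_contra hlt
  push_neg at hlt
  obtain ⟨f, hf⟩ := Nat.sInf_mem (⟨8, h8m⟩ :
    Set.Nonempty {n | ∃ f : Fin M × Fin 5 → Fin n, IsInjColoring G f})
  have hle : injChrom G ≤ 7 := by omega
  exact h7 (Fin.castLE hle ∘ f)
    (fun v u w h1 h2 h3 hEq => hf v u w h1 h2 h3 (Fin.castLE_injective hle hEq))

/-- Explicit 8-coloring of `C_3 × C_5`. -/
def col3 : Fin 3 × Fin 5 → Fin 8 := fun p =>
  ⟨(5 * p.1.val + p.2.val) / 2, by have := p.1.isLt; have := p.2.isLt; omega⟩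

/-- Explicit 8-coloring of `C_6 × C_5`. -/
def col6 : Fin 6 × Fin 5 → Fin 8 := fun p =>
  ⟨(5 * (p.1.val / 2) + p.2.val) / 2, by have := p.1.isLt; have := p.2.isLt; omega⟩

/-- The even-row embedding of `C_3 × C_5`'s vertex set into `C_6 × C_5`'s. -/
def e65 : Fin 3 × Fin 5 → Fin 6 × Fin 5 := fun p => (⟨2 * p.1.val, by omega⟩, p.2)

lemma e65_inj : Function.Injective e65 := by decide

lemma col3_ok : IsInjColoring (directProd (cycleGraph 3) (cycleGraph 5)) col3 := by
  unfold IsInjColoring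
  decide

set_option maxHeartbeats 3000000 in
lemma col6_ok : IsInjColoring (directProd (cycleGraph 6) (cycleGraph 5)) col6 := by
  unfold IsInjColoring
  decide

set_option maxHeartbeats 3000000 in
lemma triple3 : ∀ x y z : Fin 3 × Fin 5, x ≠ y → x ≠ z → y ≠ z →
    ∃ v : Fin 3 × Fin 5,
      ((directProd (cycleGraph 3) (cycleGraph 5)).Adj v (id x) ∧
       (directProd (cycleGraph 3) (cycleGraph 5)).Adj v (id y)) ∨
      ((directProd (cycleGraph 3) (cycleGraph 5)).Adj v (id x) ∧
       (directProd (cycleGraph 3) (cycleGraph 5)).Adj v (id z)) ∨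
      ((directProd (cycleGraph 3) (cycleGraph 5)).Adj v (id y) ∧
       (directProd (cycleGraph 3) (cycleGraph 5)).Adj v (id z)) := by
  decide

set_option maxHeartbeats 3000000 in
lemma triple6 : ∀ x y z : Fin 3 × Fin 5, x ≠ y → x ≠ z → y ≠ z →
    ∃ v : Fin 6 × Fin 5,
      ((directProd (cycleGraph 6) (cycleGraph 5)).Adj v (e65 x) ∧
       (directProd (cycleGraph 6) (cycleGraph 5)).Adj v (e65 y)) ∨
      ((directProd (cycleGraph 6) (cycleGraph 5)).Adj v (e65 x) ∧
       (directProd (cycleGraph 6) (cycleGraph 5)).Adj v (e65 z)) ∨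
      ((directProd (cycleGraph 6) (cycleGraph 5)).Adj v (e65 y) ∧
       (directProd (cycleGraph 6) (cycleGraph 5)).Adj v (e65 z)) := by
  decide

end Aux

/-- for `m ∈ {3, 6}`, `χ_i(C_m × C_5) = 8`. -/
theorem injChrom_directProd_cycles_eight (m : ℕ) (hm : m ∈ ({3, 6} : Set ℕ)) :
    injChrom (directProd (cycleGraph m) (cycleGraph 5)) = 8 := by
  rcases hm with rfl | hm
  · exact main_eq col3 col3_ok (fun f hf => no_seven id Function.injective_id triple3 f hf)
  · rw [Set.mem_singleton_iff] at hm
    subst hm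
    exact main_eq col6 col6_ok (fun f hf => no_seven e65 e65_inj triple6 f hf)
end

section
/- For every integer k ≥ 2 and every odd integer n ≥ 5, the chromatic number of the strong product of cycles satisfies χ(C_{2k} ⊠ C_n) = 5. -/
open SimpleGraph Finset

variable {α β : Type*}

abbrev K4 := ZMod 2 × ZMod 2

lemma key4 : ∀ a b c d : K4, a ≠ b → a ≠ c → a ≠ d → b ≠ c → b ≠ d → c ≠ d →
    a + b + c + d = 0 := by decide

lemma keyX : ∀ a b c d : K4, a + b + c + d = 0 → d + b = c + a := by decide

lemma keyNe : ∀ a b : K4, a ≠ b → a + b ≠ 0 := by decide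

lemma keyXD : ∀ a b c : K4, b ≠ c → b + a ≠ a + c := by decide

lemma Kself : ∀ x : K4, x + x = 0 := by decide

lemma nsmul_even {k : ℕ} (hk : Even k) (x : K4) : k • x = 0 := by
  obtain ⟨r, rfl⟩ := hk
  rw [add_nsmul]; exact Kself _

lemma nsmul_odd {k : ℕ} (hk : Odd k) (x : K4) : k • x = x := by
  obtain ⟨r, rfl⟩ := hk
  rw [add_nsmul, two_mul, add_nsmul, one_nsmul]
  rw [Kself]; simp

lemma pick : ∀ e : K4, e ≠ 0 → ∃ a b : K4, a ≠ 0 ∧ b ≠ 0 ∧ a + b ≠ 0 ∧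
    ∀ x : K4, x ≠ 0 → x ≠ e → (x = a ∨ x = b) := by decide

lemma attained {N : ℕ} (hN : Odd N) (D : Fin N → K4) (hD0 : ∀ j, D j ≠ 0)
    (hsum : ∑ j, D j = 0) (e : K4) (he : e ≠ 0) : ∃ j, D j = e := by
  by_contra hcon
  push_neg at hcon
  obtain ⟨a, b, ha, hb, hab, htri⟩ := pick e he
  have hDab : ∀ j, D j = a ∨ D j = b := fun j => htri _ (hD0 j) (hcon j)
  rw [← Finset.sum_filter_add_sum_filter_not Finset.univ (fun j => D j = a)] at hsum
  have h1 : ∑ j ∈ Finset.univ.filter (fun j => D j = a), D j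
      = (Finset.univ.filter (fun j => D j = a)).card • a := by
    rw [Finset.sum_congr rfl (fun j hj => (Finset.mem_filter.mp hj).2), Finset.sum_const]
  have h2 : ∑ j ∈ Finset.univ.filter (fun j => ¬ D j = a), D j
      = (Finset.univ.filter (fun j => ¬ D j = a)).card • b := by
    rw [Finset.sum_congr rfl (fun j hj => ((hDab j).resolve_left (Finset.mem_filter.mp hj).2)),
      Finset.sum_const]
  rw [h1, h2] at hsum
  have hcard : (Finset.univ.filter (fun j => D j = a)).card
      + (Finset.univ.filter (fun j => ¬ D j = a)).card = N := by
    rw [Finset.card_filter_add_card_filter_not]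
    simp
  rcases Nat.even_or_odd (Finset.univ.filter (fun j => D j = a)).card with hA | hA <;>
    rcases Nat.even_or_odd (Finset.univ.filter (fun j => ¬ D j = a)).card with hB | hB
  · rcases hN with ⟨r, hr⟩
    rcases hA with ⟨s, hs⟩; rcases hB with ⟨t, ht⟩
    omega
  · rw [nsmul_even hA, nsmul_odd hB, zero_add] at hsum; exact hb hsum
  · rw [nsmul_odd hA, nsmul_even hB, add_zero] at hsum; exact ha hsum
  · rw [nsmul_odd hA, nsmul_odd hB] at hsum; exact hab hsum

lemma no4 (m n : ℕ) (hn : Odd (n + 2)) (g : Fin (m+2) × Fin (n+2) → K4)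
    (hg : ∀ u v, (strongProd (cycleGraph (m+2)) (cycleGraph (n+2))).Adj u v → g u ≠ g v) :
    False := by
  have hadj01 : (cycleGraph (m+2)).Adj 0 1 := by rw [cycleGraph_adj]; right; simp
  have hadjj : ∀ j : Fin (n+2), (cycleGraph (n+2)).Adj j (j+1) := by
    intro j; rw [cycleGraph_adj]; right; simp
  have d1 : ∀ j : Fin (n+2), g (0, j) ≠ g (0, j+1) := fun j =>
    hg _ _ (Or.inl ⟨rfl, hadjj j⟩)
  have d2 : ∀ j : Fin (n+2), g (0, j) ≠ g (1, j) := fun j =>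
    hg _ _ (Or.inr (Or.inl ⟨hadj01, rfl⟩))
  have d3 : ∀ j : Fin (n+2), g (0, j) ≠ g (1, j+1) := fun j =>
    hg _ _ (Or.inr (Or.inr ⟨hadj01, hadjj j⟩))
  have d4 : ∀ j : Fin (n+2), g (0, j+1) ≠ g (1, j) := fun j =>
    hg _ _ (Or.inr (Or.inr ⟨hadj01, (hadjj j).symm⟩))
  have d5 : ∀ j : Fin (n+2), g (0, j+1) ≠ g (1, j+1) := fun j =>
    hg _ _ (Or.inr (Or.inl ⟨hadj01, rfl⟩))
  have d6 : ∀ j : Fin (n+2), g (1, j) ≠ g (1, j+1) := fun j =>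
    hg _ _ (Or.inl ⟨rfl, hadjj j⟩)
  set D : Fin (n+2) → K4 := fun j => g (0, j) + g (0, j+1) with hD
  set X : Fin (n+2) → K4 := fun j => g (1, j) + g (0, j) with hX
  have hS : ∀ j, g (0, j) + g (0, j+1) + g (1, j) + g (1, j+1) = 0 := fun j =>
    key4 _ _ _ _ (d1 j) (d2 j) (d3 j) (d4 j) (d5 j) (d6 j)
  have hXstep : ∀ j, X (j+1) = X j := by
    intro j
    simp only [hX]
    exact keyX _ _ _ _ (hS j)
  have hXc : ∀ j, X j = X 0 := by
    intro j
    obtain ⟨v, hv⟩ := j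
    induction v with
    | zero => rfl
    | succ w ih =>
      have hw : w < n + 2 := Nat.lt_of_succ_lt hv
      have heq : (⟨w, hw⟩ : Fin (n+2)) + 1 = ⟨w+1, hv⟩ := by
        apply Fin.ext
        simp [Fin.add_def, Nat.mod_eq_of_lt hv]
      rw [← heq, hXstep, ih hw]
  have hD0 : ∀ j, D j ≠ 0 := fun j => keyNe _ _ (d1 j)
  have hsum : ∑ j, D j = 0 := by
    have hre : ∑ j : Fin (n+2), g (0, j+1) = ∑ j : Fin (n+2), g (0, j) :=
      Fintype.sum_equiv (Equiv.addRight 1) _ _ (fun j => rfl)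
    simp only [hD, Finset.sum_add_distrib, hre]
    exact Kself _
  have hX0 : X 0 ≠ 0 := keyNe _ _ (d2 0).symm
  obtain ⟨j, hj⟩ := attained hn D hD0 hsum (X 0) hX0
  rw [← hXc j] at hj
  exact keyXD (g (0, j)) (g (1, j)) (g (0, j+1)) (d4 j).symm hj.symm
lemma colorable5 (m n : ℕ) (hm : Even (m+2)) (hn : Odd (n+2)) (hn5 : 5 ≤ n+2) :
    (strongProd (cycleGraph (m+2)) (cycleGraph (n+2))).Colorable 5 := by
  classical
  set p : Fin (m+2) → ZMod 5 := fun i => ((3 * (i.val % 2) : ℕ) : ZMod 5) with hp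
  set h : Fin (n+2) → ZMod 5 := fun j =>
    if j.val + 5 < n + 2 then ((j.val % 2 : ℕ) : ZMod 5)
    else ((j.val + 5 - (n+2) : ℕ) : ZMod 5) with hh
  -- step lemma for h
  have hstep : ∀ j : Fin (n+2), h (j+1) = h j + 1 ∨ h (j+1) = h j - 1 := by
    intro j
    obtain ⟨v, hv⟩ := j
    have hval : ((⟨v, hv⟩ : Fin (n+2)) + 1).val = (v + 1) % (n + 2) := by
      simp [Fin.add_def]
    rcases Nat.lt_or_ge (v+1) (n+2) with hlt | hge
    · have hval' : ((⟨v, hv⟩ : Fin (n+2)) + 1).val = v + 1 := by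
        rw [hval, Nat.mod_eq_of_lt hlt]
      rcases Nat.lt_or_ge (v + 5) (n+2) with h5 | h5
      · rcases Nat.lt_or_ge (v + 6) (n+2) with h6 | h6
        · -- both in region 1
          have e1 : h ⟨v, hv⟩ = ((v % 2 : ℕ) : ZMod 5) := by simp [hh, h5]
          have e2 : h (⟨v, hv⟩ + 1) = (((v+1) % 2 : ℕ) : ZMod 5) := by
            simp only [hh, hval']
            rw [if_pos (by omega)]
          rcases Nat.mod_two_eq_zero_or_one v with hv2 | hv2
          · left; rw [e1, e2, hv2, Nat.add_mod, hv2]; norm_num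
          · right; rw [e1, e2, hv2, Nat.add_mod, hv2]; norm_num
        · -- v+6 = n+2 (boundary), v odd since n+2 odd
          have h6' : v + 6 = n + 2 := by omega
          have hvodd : v % 2 = 1 := by
            rcases hn with ⟨r, hr⟩; omega
          have e1 : h ⟨v, hv⟩ = ((v % 2 : ℕ) : ZMod 5) := by simp [hh, h5]
          have e2 : h (⟨v, hv⟩ + 1) = ((0 : ℕ) : ZMod 5) := by
            simp only [hh, hval']
            rw [if_neg (by omega)]
            congr 1
            omega
          right; rw [e1, e2, hvodd]; decide
      · -- region 2, not last vertex
        have e1 : h ⟨v, hv⟩ = ((v + 5 - (n+2) : ℕ) : ZMod 5) := by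
          simp only [hh]; rw [if_neg (by omega)]
        have e2 : h (⟨v, hv⟩ + 1) = ((v + 5 - (n+2) + 1 : ℕ) : ZMod 5) := by
          simp only [hh, hval']
          rw [if_neg (by omega)]
          congr 1
          omega
        left; rw [e1, e2]; push_cast; ring
    · -- wrap around: v = n+1
      have hv' : v = n + 1 := by omega
      have hveq : v + 1 = n + 2 := by omega
      have hval' : ((⟨v, hv⟩ : Fin (n+2)) + 1).val = 0 := by
        rw [hval, hveq, Nat.mod_self]
      have e1 : h ⟨v, hv⟩ = ((4 : ℕ) : ZMod 5) := by
        simp only [hh]; rw [if_neg (by omega)]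
        congr 1
        omega
      have e2 : h (⟨v, hv⟩ + 1) = ((0 : ℕ) : ZMod 5) := by
        simp only [hh, hval']
        rcases Nat.lt_or_ge (0 + 5) (n+2) with h5 | h5
        · rw [if_pos (by omega)]
        · rw [if_neg (by omega)]
          congr 1
          omega
      left; rw [e1, e2]; decide
  -- h on adjacent vertices
  have hadjh : ∀ a b : Fin (n+2), (cycleGraph (n+2)).Adj a b →
      h b = h a + 1 ∨ h b = h a - 1 := by
    intro a b hab
    rw [cycleGraph_adj] at hab
    rcases hab with hab | hab
    · -- a - b = 1, so a = b + 1
      have : a = b + 1 := by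
        rw [sub_eq_iff_eq_add] at hab; rw [hab]; exact add_comm _ _
      rcases hstep b with hs | hs <;> rw [← this] at hs
      · right; rw [hs]; ring
      · left; rw [hs]; ring
    · have : b = a + 1 := by
        rw [sub_eq_iff_eq_add] at hab; rw [hab]; exact add_comm _ _
      rw [this]; exact hstep a
  -- p on adjacent vertices
  have hadjp : ∀ a b : Fin (m+2), (cycleGraph (m+2)).Adj a b →
      (p a = 0 ∧ p b = 3) ∨ (p a = 3 ∧ p b = 0) := by
    intro a b hab
    have hparity : a.val % 2 ≠ b.val % 2 := by
      rw [cycleGraph_adj] at hab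
      have key : ∀ x : Fin (m+2), ((x + 1 : Fin (m+2)).val) % 2 ≠ x.val % 2 := by
        intro x
        have hval : ((x + 1 : Fin (m+2)).val) = (x.val + 1) % (m+2) := by
          simp [Fin.add_def]
        rcases Nat.lt_or_ge (x.val + 1) (m+2) with hlt | hge
        · rw [hval, Nat.mod_eq_of_lt hlt]; omega
        · have : x.val + 1 = m + 2 := by omega
          rw [hval, this, Nat.mod_self]
          rcases hm with ⟨r, hr⟩
          omega
      rcases hab with hab | hab
      · have : a = b + 1 := by rw [sub_eq_iff_eq_add] at hab; rw [hab]; exact add_comm _ _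
        rw [this]; exact key b
      · have : b = a + 1 := by rw [sub_eq_iff_eq_add] at hab; rw [hab]; exact add_comm _ _
        rw [this]; exact (key a).symm
    rcases Nat.mod_two_eq_zero_or_one a.val with ha2 | ha2 <;>
      rcases Nat.mod_two_eq_zero_or_one b.val with hb2 | hb2
    · omega
    · left
      constructor <;> simp only [hp] <;> [rw [ha2]; rw [hb2]] <;> norm_num
    · right
      constructor <;> simp only [hp] <;> [rw [ha2]; rw [hb2]] <;> norm_num
    · omega
  -- the coloring
  have hcol : ∀ u v : Fin (m+2) × Fin (n+2),
      (strongProd (cycleGraph (m+2)) (cycleGraph (n+2))).Adj u v →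
      h u.2 + p u.1 ≠ h v.2 + p v.1 := by
    rintro u v (⟨h1, h2⟩ | ⟨h1, h2⟩ | ⟨h1, h2⟩) hEq
    · rw [h1] at hEq
      have hEq2 : h u.2 = h v.2 := by
        exact add_right_cancel hEq
      rcases hadjh _ _ h2 with hs | hs <;> rw [hs] at hEq2
      · exact absurd (by linear_combination -hEq2 : (1 : ZMod 5) = 0) (by decide)
      · exact absurd (by linear_combination hEq2 : (1 : ZMod 5) = 0) (by decide)
    · rw [h2] at hEq
      have hEq2 : p u.1 = p v.1 := add_left_cancel hEq
      rcases hadjp _ _ h1 with ⟨e1, e2⟩ | ⟨e1, e2⟩ <;> rw [e1, e2] at hEq2 <;>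
        exact absurd hEq2 (by decide)
    · rcases hadjh _ _ h2 with hs | hs <;>
        rcases hadjp _ _ h1 with ⟨e1, e2⟩ | ⟨e1, e2⟩ <;>
        rw [hs, e1, e2] at hEq
      · exact absurd (by linear_combination -hEq : (4 : ZMod 5) = 0) (by decide)
      · exact absurd (by linear_combination hEq : (2 : ZMod 5) = 0) (by decide)
      · exact absurd (by linear_combination -hEq : (2 : ZMod 5) = 0) (by decide)
      · exact absurd (by linear_combination hEq : (4 : ZMod 5) = 0) (by decide)
  have C : (strongProd (cycleGraph (m+2)) (cycleGraph (n+2))).Coloring (ZMod 5) :=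
    SimpleGraph.Coloring.mk (fun x => h x.2 + p x.1) (fun {u v} hadj => hcol u v hadj)
  have := C.colorable
  rwa [ZMod.card] at this
/-- for `k ≥ 2` and odd `n ≥ 5`, `χ(C_{2k} ⊠ C_n) = 5`. -/
theorem chromaticNumber_strongProd_cycles_five (k n : ℕ) (hk : 2 ≤ k)
    (hn : 5 ≤ n) (hno : Odd n) :
    (strongProd (cycleGraph (2 * k)) (cycleGraph n)).chromaticNumber = 5 := by
  obtain ⟨q, rfl⟩ : ∃ q, n = q + 2 := ⟨n - 2, by omega⟩
  have hm2 : 2 * k = (2 * k - 2) + 2 := by omega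
  rw [hm2]
  set m := 2 * k - 2 with hmdef
  have hmeven : Even (m + 2) := ⟨k, by omega⟩
  have h5 : (strongProd (cycleGraph (m+2)) (cycleGraph (q+2))).Colorable 5 :=
    colorable5 m q hmeven hno hn
  have h4 : ¬ (strongProd (cycleGraph (m+2)) (cycleGraph (q+2))).Colorable 4 := by
    intro hcol
    obtain ⟨C⟩ := hcol
    have e : Fin 4 ≃ K4 := Fintype.equivOfCardEq (by simp)
    exact no4 m q hno (fun u => e (C u))
      (fun u v hadj hEq => C.valid hadj (e.injective hEq))
  refine le_antisymm (by exact_mod_cast h5.chromaticNumber_le) ?_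
  have hlt : (4 : ℕ∞) < (strongProd (cycleGraph (m+2)) (cycleGraph (q+2))).chromaticNumber := by
    by_contra hle
    push_neg at hle
    exact h4 (SimpleGraph.chromaticNumber_le_iff_colorable.mp (by exact_mod_cast hle))
  have := Order.add_one_le_of_lt hlt
  norm_num at this ⊢
  exact this
end

section
/- Let G be a connected finite simple graph of order at least two and let H be a finite simple graph with no isolated vertices. Then χ_i(G ∘ H) = χ_2(G ∘ H) and χ_i(G ∘ H) ≥ (Δ(G) + 1)·|V(H)|. -/
open SimpleGraph Finset

variable {α β : Type*}

private lemma exists_adj_of_conn {α : Type*} [Fintype α] (G : SimpleGraph α)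
    (hG : G.Connected) (hcard : 2 ≤ Fintype.card α) (a : α) : ∃ b, G.Adj a b := by
  obtain ⟨b, hb⟩ := Fintype.exists_ne_of_one_lt_card (by omega) a
  obtain ⟨w⟩ := hG.preconnected a b
  cases w with
  | nil => exact absurd rfl hb
  | cons h _ => exact ⟨_, h⟩

private lemma common_nbr {α β : Type*} [Fintype α] (G : SimpleGraph α) (H : SimpleGraph β)
    (hG : G.Connected) (hcard : 2 ≤ Fintype.card α)
    (hH : ∀ h : β, ∃ h', H.Adj h h') {x y : α × β} (hxy : (lexProd G H).Adj x y) :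
    ∃ z, (lexProd G H).Adj z x ∧ (lexProd G H).Adj z y := by
  rcases hxy with h | ⟨h1, h2⟩
  · obtain ⟨h', hh'⟩ := hH x.2
    exact ⟨(x.1, h'), Or.inr ⟨rfl, hh'.symm⟩, Or.inl h⟩
  · obtain ⟨b, hb⟩ := exists_adj_of_conn G hG hcard x.1
    exact ⟨(b, x.2), Or.inl hb.symm, Or.inl (by rw [← h1]; exact hb.symm)⟩

/-- for a connected finite graph `G` of order at least two and a finite
graph `H` with no isolated vertices, `χ_i(G ∘ H) = χ₂(G ∘ H)` and
`χ_i(G ∘ H) ≥ (Δ(G) + 1)·|V(H)|`. -/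
theorem injChrom_lexProd_eq_distTwoChrom {α β : Type*} [Fintype α] [Fintype β]
    (G : SimpleGraph α) [DecidableRel G.Adj] (H : SimpleGraph β)
    (hG : G.Connected) (hcard : 2 ≤ Fintype.card α)
    (hH : ∀ h : β, ∃ h', H.Adj h h') :
    injChrom (lexProd G H) = distTwoChrom (lexProd G H) ∧
      injChrom (lexProd G H) ≥ (G.maxDegree + 1) * Fintype.card β := by
  have hinj_of_d2 : ∀ {n : ℕ} (f : α × β → Fin n),
      IsDistTwoColoring (lexProd G H) f → IsInjColoring (lexProd G H) f := by
    intro n f hf v u w hvu hvw huw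
    exact hf u w huw (Or.inr ⟨v, hvu.symm, hvw⟩)
  have hd2_of_inj : ∀ {n : ℕ} (f : α × β → Fin n),
      IsInjColoring (lexProd G H) f → IsDistTwoColoring (lexProd G H) f := by
    intro n f hf u v huv hadj
    rcases hadj with hadj | ⟨w, h1, h2⟩
    · obtain ⟨z, hz1, hz2⟩ := common_nbr G H hG hcard hH hadj
      exact hf z u v hz1 hz2 huv
    · exact hf w u v h1.symm h2 huv
  have hset : {n : ℕ | ∃ f : α × β → Fin n, IsInjColoring (lexProd G H) f} =
      {n : ℕ | ∃ f : α × β → Fin n, IsDistTwoColoring (lexProd G H) f} := by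
    ext n
    exact ⟨fun ⟨f, hf⟩ => ⟨f, hd2_of_inj f hf⟩, fun ⟨f, hf⟩ => ⟨f, hinj_of_d2 f hf⟩⟩
  constructor
  · unfold injChrom distTwoChrom
    rw [hset]
  · have hne : {n : ℕ | ∃ f : α × β → Fin n, IsInjColoring (lexProd G H) f}.Nonempty := by
      refine ⟨Fintype.card (α × β), Fintype.equivFin (α × β), ?_⟩
      intro v u w _ _ huw h
      exact huw ((Fintype.equivFin (α × β)).injective h)
    obtain ⟨f, hf⟩ := Nat.sInf_mem hne
    have : Nonempty α := Fintype.card_pos_iff.mp (by omega)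
    classical
    obtain ⟨g, hg⟩ := G.exists_maximal_degree_vertex
    set S : Finset (α × β) := (insert g (G.neighborFinset g)) ×ˢ Finset.univ with hS
    have hcommon : ∀ x ∈ S, ∀ y ∈ S, x ≠ y →
        ∃ z, (lexProd G H).Adj z x ∧ (lexProd G H).Adj z y := by
      intro x hx y hy hxy
      simp only [hS, Finset.mem_product, Finset.mem_insert,
        SimpleGraph.mem_neighborFinset] at hx hy
      by_cases h1 : x.1 = y.1
      · obtain ⟨b, hb⟩ := exists_adj_of_conn G hG hcard x.1
        exact ⟨(b, x.2), Or.inl hb.symm, Or.inl (by rw [← h1]; exact hb.symm)⟩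
      · rcases hx.1 with hxg | hxg <;> rcases hy.1 with hyg | hyg
        · exact absurd (hxg.trans hyg.symm) h1
        · exact common_nbr G H hG hcard hH (Or.inl (by rw [hxg]; exact hyg))
        · exact common_nbr G H hG hcard hH (Or.inl (by rw [hyg]; exact hxg.symm))
        · exact ⟨(g, x.2), Or.inl hxg, Or.inl hyg⟩
    have hinjOn : Set.InjOn f S := by
      intro x hx y hy hfxy
      by_contra hne'
      obtain ⟨z, hz1, hz2⟩ := hcommon x hx y hy hne'
      exact hf z x y hz1 hz2 hne' hfxy
    have hcard1 : S.card ≤ injChrom (lexProd G H) := by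
      have := Finset.card_le_card_of_injOn f (fun a _ => Finset.mem_univ (f a)) hinjOn
      simpa [injChrom] using this
    have hcard2 : S.card = (G.maxDegree + 1) * Fintype.card β := by
      rw [hS, Finset.card_product, Finset.card_insert_of_notMem (by simp),
        Finset.card_univ]
      rw [SimpleGraph.card_neighborFinset_eq_degree, ← hg]
    omega
end
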